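/- arXiv:1310.5253 — 4 statements merged into one kernel-verified Lean document; each statement's English description precedes it below -/
import Mathlib

section
/- Let ν, θ, η be finite positive Borel measures on a measurable space. Then the measures inf{ν, θ} and inf{ν, η} (greatest lower bounds in the lattice of measures) satisfy |inf{ν,θ} − inf{ν,η}| ≤ |θ − η| as measures, i.e. the total variation measure of their difference is dominated by the total variation measure of θ − η. -/
/-!
The Jordan decomposition of `θ - η` gives `θ ≤ η + (θ - η)`, and an infimum of measures absorbs
an added measure, so `ν ⊓ θ ≤ ν ⊓ (η + (θ - η)) ≤ ν ⊓ η + (θ - η)`, i.e.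
`ν ⊓ θ - ν ⊓ η ≤ θ - η`. Adding the same bound with `θ` and `η` exchanged gives the claim.
-/

open MeasureTheory Set

namespace MeasureTheory.Measure

variable {α : Type*} [MeasurableSpace α]

lemma add_sub_eq_add_sub (μ ν : Measure α) [IsFiniteMeasure μ] [IsFiniteMeasure ν] :
    μ + (ν - μ) = ν + (μ - ν) := by
  have h := sub_eq_sub_iff_add_eq_add.mp
    (sub_toSignedMeasure_eq_toSignedMeasure_sub (μ := μ) (ν := ν))
  rw [← toSignedMeasure_eq_toSignedMeasure_iff, toSignedMeasure_add, toSignedMeasure_add, h,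
    add_comm]

lemma le_add_sub (μ ν : Measure α) [IsFiniteMeasure μ] [IsFiniteMeasure ν] :
    μ ≤ ν + (μ - ν) :=
  add_sub_eq_add_sub μ ν ▸ Measure.le_add_right le_rfl

lemma inf_add_le_inf_add (ν η δ : Measure α) : ν ⊓ (η + δ) ≤ ν ⊓ η + δ := by
  rw [le_iff]
  intro s hs
  rw [add_apply, inf_apply hs, inf_apply hs, ENNReal.sInf_add]
  refine le_iInf₂ fun m ⟨t, hm⟩ => ?_
  have hmem : ν (t ∩ s) + (η + δ) (tᶜ ∩ s) ∈ {m | ∃ u, m = ν (u ∩ s) + (η + δ) (uᶜ ∩ s)} :=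
    ⟨t, rfl⟩
  refine hm ▸ (sInf_le hmem).trans ?_
  rw [add_apply, ← add_assoc]
  gcongr
  exact inter_subset_right

lemma inf_sub_inf_le_sub (ν θ η : Measure α) [IsFiniteMeasure θ] [IsFiniteMeasure η] :
    ν ⊓ θ - ν ⊓ η ≤ θ - η := by
  refine sub_le_of_le_add ?_
  calc ν ⊓ θ ≤ ν ⊓ (η + (θ - η)) := inf_le_inf_left ν (le_add_sub θ η)
    _ ≤ ν ⊓ η + (θ - η) := inf_add_le_inf_add ν η (θ - η)
    _ = θ - η + ν ⊓ η := add_comm _ _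

end MeasureTheory.Measure

theorem stmt10_general {α : Type*} [MeasurableSpace α] (ν θ η : Measure α)
    [IsFiniteMeasure θ] [IsFiniteMeasure η] :
    ((ν ⊓ θ) - (ν ⊓ η)) + ((ν ⊓ η) - (ν ⊓ θ)) ≤ (θ - η) + (η - θ) :=
  add_le_add (Measure.inf_sub_inf_le_sub ν θ η) (Measure.inf_sub_inf_le_sub ν η θ)

/-- for finite positive measures `ν, θ, η`, the lattice infima satisfy
`|inf{ν,θ} − inf{ν,η}| ≤ |θ − η|` as measures, where the total variation measure of a
difference of positive measures `μ₁ − μ₂` is `(μ₁ − μ₂) + (μ₂ − μ₁)` (truncated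
measure subtraction). -/
theorem stmt10 {α : Type*} [MeasurableSpace α] (ν θ η : Measure α)
    [IsFiniteMeasure ν] [IsFiniteMeasure θ] [IsFiniteMeasure η] :
    ((ν ⊓ θ) - (ν ⊓ η)) + ((ν ⊓ η) - (ν ⊓ θ)) ≤ (θ - η) + (η - θ) :=
  stmt10_general ν θ η
end

section
/- Let (Q, μ) be a finite measure space, {a_n} a sequence converging to a weakly in L¹(Q, μ), and {b_n} a sequence bounded in L^∞(Q, μ) converging to b μ-a.e. Then ∫_Q a_n b_n dμ → ∫_Q a b dμ. -/
/-!
Weak convergence of `aₙ` in `L¹` makes `∫_A aₙ` converge for every measurable `A`. By the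
Vitali–Hahn–Saks theorem, proved by Baire category on the measure algebra (the `{0,1}`-valued
elements of `L¹`, a closed and hence complete set), the `aₙ` are then uniformly integrable; by
Banach–Steinhaus on `L^∞` they are bounded in `L¹`.

Now split `∫ aₙ bₙ = ∫ aₙ (bₙ - b) + ∫ aₙ b`. The second term converges by weak convergence. In
the first, `cₙ = bₙ - b` is bounded and tends to `0` in measure: the set where `|cₙ| ≥ η` is small,
so uniform integrability controls the integral there, and off it the `L¹` bound does.
-/

open MeasureTheory Filter Set
open scoped ENNReal NNReal Topology symmDiff

namespace MeasureTheory

variable {α : Type*} [MeasurableSpace α] {μ : Measure α}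

lemma lintegral_enorm_mul_le_of_enorm_le_off {a c : α → ℝ} (ha : AEStronglyMeasurable a μ)
    {C η : ℝ≥0} (hc : ∀ᵐ x ∂μ, ‖c x‖ₑ ≤ C) {s : Set α} (hη : ∀ x ∉ s, ‖c x‖ₑ ≤ η) :
    ∫⁻ x, ‖a x * c x‖ₑ ∂μ ≤ C * eLpNorm (s.indicator a) 1 μ + η * eLpNorm a 1 μ := by
  simp only [eLpNorm_one_eq_lintegral_enorm, ← lintegral_const_mul' _ _ ENNReal.coe_ne_top]
  rw [← lintegral_add_right' _ (ha.enorm.const_mul _)]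
  refine lintegral_mono_ae ?_
  filter_upwards [hc] with x hcx
  rw [enorm_mul]
  by_cases hx : x ∈ s
  · rw [indicator_of_mem hx, mul_comm]
    exact le_add_right (by gcongr)
  · rw [mul_comm (η : ℝ≥0∞)]
    exact le_add_left (by gcongr; exact hη x hx)

theorem UniformIntegrable.tendsto_integral_mul_of_tendstoInMeasure {ι : Type*} {l : Filter ι}
    {a c : ι → α → ℝ} (hui : UniformIntegrable a 1 μ) (hc : TendstoInMeasure μ c l 0) {C : ℝ}
    (hcC : ∀ i, ∀ᵐ x ∂μ, |c i x| ≤ C) :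
    Tendsto (fun i => ∫ x, a i x * c i x ∂μ) l (𝓝 0) := by
  obtain ⟨ha, hunif, M, hM⟩ := hui
  rw [tendsto_zero_iff_enorm_tendsto_zero, ENNReal.tendsto_nhds_zero]
  intro e he
  have hK : (C.toNNReal + M : ℝ≥0∞) ≠ ∞ := by finiteness
  obtain ⟨η, hη, hηe⟩ := ENNReal.exists_nnreal_pos_mul_lt hK he.ne'
  obtain ⟨δ, hδ, hsmall⟩ := hunif (ε := η) hη
  filter_upwards [(ENNReal.tendsto_nhds_zero.1 (hc η (by exact_mod_cast hη)))
    (ENNReal.ofReal δ) (ENNReal.ofReal_pos.2 hδ)] with i hi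
  set s := toMeasurable μ {x | (η : ℝ≥0∞) ≤ edist (c i x) ((0 : α → ℝ) x)}
  have hs : eLpNorm (s.indicator (a i)) 1 μ ≤ η := by
    simpa using hsmall i s (measurableSet_toMeasurable _ _) (by rwa [measure_toMeasurable])
  have hcs : ∀ x ∉ s, ‖c i x‖ₑ ≤ η := fun x hx => by
    have := mt (fun h => subset_toMeasurable μ _ h) hx
    simp only [mem_ofPred_eq, not_le, Pi.zero_apply, edist_zero_right] at this
    exact this.le
  have hcC' : ∀ᵐ x ∂μ, ‖c i x‖ₑ ≤ C.toNNReal := by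
    filter_upwards [hcC i] with x hx
    rw [Real.enorm_eq_ofReal_abs]
    exact ENNReal.ofReal_le_ofReal hx
  calc ‖∫ x, a i x * c i x ∂μ‖ₑ ≤ ∫⁻ x, ‖a i x * c i x‖ₑ ∂μ := enorm_integral_le_lintegral_enorm _
    _ ≤ C.toNNReal * eLpNorm (s.indicator (a i)) 1 μ + η * eLpNorm (a i) 1 μ :=
      lintegral_enorm_mul_le_of_enorm_le_off (ha i) hcC' hcs
    _ ≤ C.toNNReal * η + η * M := by gcongr; exact hM i
    _ = η * (C.toNNReal + M) := by ring
    _ ≤ e := hηe.le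

def l1Indicators (μ : Measure α) : Set (Lp ℝ 1 μ) :=
  {f | ∀ᵐ x ∂μ, f x = 0 ∨ f x = 1}

lemma isClosed_l1Indicators : IsClosed (l1Indicators μ) := by
  refine isSeqClosed_iff_isClosed.1 fun f g hf hfg => ?_
  obtain ⟨ns, -, hns⟩ := (tendstoInMeasure_of_tendsto_Lp hfg).exists_seq_tendsto_ae
  have hf' : ∀ᵐ x ∂μ, ∀ i, f (ns i) x ∈ ({0, 1} : Set ℝ) := ae_all_iff.2 fun i => hf (ns i)
  filter_upwards [hns, hf'] with x hx hfx
  simpa using (Set.toFinite _).isClosed.mem_of_tendsto hx (.of_forall hfx)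

lemma indicatorConstLp_mem_l1Indicators {A : Set α} (hA : MeasurableSet A) (hμA : μ A ≠ ∞) :
    indicatorConstLp 1 hA hμA (1 : ℝ) ∈ l1Indicators μ := by
  filter_upwards [indicatorConstLp_coeFn (p := 1) (hs := hA) (hμs := hμA) (c := (1 : ℝ))] with x hx
  by_cases h : x ∈ A <;> simp [hx, h]

lemma exists_eq_indicatorConstLp_of_mem_l1Indicators [IsFiniteMeasure μ] {f : Lp ℝ 1 μ}
    (hf : f ∈ l1Indicators μ) :
    ∃ A, ∃ hA : MeasurableSet A, f = indicatorConstLp 1 hA (measure_ne_top μ A) (1 : ℝ) := by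
  have hA : MeasurableSet (f ⁻¹' {1}) :=
    (Lp.stronglyMeasurable f).measurable (measurableSet_singleton 1)
  refine ⟨_, hA, Lp.ext ?_⟩
  filter_upwards [hf, indicatorConstLp_coeFn (p := 1) (hs := hA) (hμs := measure_ne_top μ _)
    (c := (1 : ℝ))] with x hfx hx
  rcases hfx with h | h <;> simp [hx, h]

lemma integral_mul_indicatorConstLp (a : α → ℝ) {A : Set α} (hA : MeasurableSet A)
    (hμA : μ A ≠ ∞) :
    ∫ x, a x * indicatorConstLp 1 hA hμA (1 : ℝ) x ∂μ = ∫ x in A, a x ∂μ := by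
  rw [← integral_indicator hA]
  refine integral_congr_ae ?_
  filter_upwards [indicatorConstLp_coeFn (p := 1) (hs := hA) (hμs := hμA) (c := (1 : ℝ))] with x hx
  by_cases h : x ∈ A <;> simp [hx, h]

lemma continuous_integral_mul_l1Indicators {a : α → ℝ} (ha : Integrable a μ) :
    Continuous fun f : l1Indicators μ => ∫ x, a x * (f : Lp ℝ 1 μ) x ∂μ := by
  have hint : ∀ f : l1Indicators μ, Integrable (fun x => a x * (f : Lp ℝ 1 μ) x) μ := fun f =>
    ha.mul_bdd (c := 1) (Lp.aestronglyMeasurable _) (Eventually.mono f.2 fun x hx => by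
      rcases hx with h | h <;> simp [h])
  refine continuous_iff_continuousAt.2 fun f => tendsto_sub_nhds_zero_iff.1 ?_
  have hui := uniformIntegrable_const (ι := l1Indicators μ) le_rfl ENNReal.one_ne_top
    (memLp_one_iff_integrable.2 ha)
  have hlim := hui.tendsto_integral_mul_of_tendstoInMeasure (l := 𝓝 f) (C := 1)
    (c := fun g x => (g : Lp ℝ 1 μ) x - (f : Lp ℝ 1 μ) x) (fun ε hε => by
      simpa [edist_eq_enorm_sub] using
        tendstoInMeasure_of_tendsto_Lp (continuous_subtype_val.tendsto f) ε hε)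
    (fun g => by
      filter_upwards [show ∀ᵐ x ∂μ, _ from g.2, show ∀ᵐ x ∂μ, _ from f.2] with x hg hf
      rcases hg with hg | hg <;> rcases hf with hf | hf <;> simp [hg, hf])
  refine hlim.congr fun g => ?_
  rw [← integral_sub (hint g) (hint f)]
  simp only [mul_sub]

theorem exists_forall_abs_setIntegral_sub_le [IsFiniteMeasure μ] {a : ℕ → α → ℝ}
    (ha : ∀ n, Integrable (a n) μ)
    (hcauchy : ∀ A, MeasurableSet A → CauchySeq fun n => ∫ x in A, a n x ∂μ) {ε : ℝ} (hε : 0 < ε) :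
    ∃ k, ∃ r > 0, ∀ B, MeasurableSet B → μ.real B < r → ∀ m ≥ k, ∀ n ≥ k,
      |∫ x in B, a m x ∂μ - ∫ x in B, a n x ∂μ| ≤ 2 * ε := by
  have : CompleteSpace (l1Indicators μ) := isClosed_l1Indicators.completeSpace_coe
  have : Nonempty (l1Indicators μ) :=
    ⟨⟨_, indicatorConstLp_mem_l1Indicators MeasurableSet.empty (measure_ne_top μ ∅)⟩⟩
  set ν : ℕ → l1Indicators μ → ℝ := fun n f => ∫ x, a n x * (f : Lp ℝ 1 μ) x ∂μ
  set F : ℕ → Set (l1Indicators μ) := fun k => {f | ∀ m ≥ k, ∀ n ≥ k, |ν m f - ν n f| ≤ ε}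
  have hFclosed : ∀ k, IsClosed (F k) := fun k => by
    simp only [F, ofPred_forall]
    exact isClosed_iInter fun m => isClosed_iInter fun _ => isClosed_iInter fun n =>
      isClosed_iInter fun _ => isClosed_le
        ((continuous_integral_mul_l1Indicators (ha m)).sub
          (continuous_integral_mul_l1Indicators (ha n))).abs continuous_const
  have hFcover : ⋃ k, F k = univ := eq_univ_of_forall fun f => by
    obtain ⟨A, hA, hfA⟩ := exists_eq_indicatorConstLp_of_mem_l1Indicators f.2
    obtain ⟨k, hk⟩ := Metric.cauchySeq_iff.1 (hcauchy A hA) ε hε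
    refine mem_iUnion.2 ⟨k, fun m hm n hn => ?_⟩
    simp only [ν, hfA, integral_mul_indicatorConstLp]
    exact (hk m hm n hn).le
  obtain ⟨k, f₀, hf₀⟩ := nonempty_interior_of_iUnion_of_closed hFclosed hFcover
  obtain ⟨r, hr, hball⟩ := Metric.isOpen_iff.1 isOpen_interior f₀ hf₀
  obtain ⟨A₀, hA₀, hf₀A₀⟩ := exists_eq_indicatorConstLp_of_mem_l1Indicators f₀.2
  refine ⟨k, r, hr, fun B hB hμB m hm n hn => ?_⟩
  -- Sets that differ from `A₀` only inside `B` have indicators in the ball on which `F k` holds.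
  have hclose : ∀ A (hA : MeasurableSet A), A ∆ A₀ ⊆ B →
      |∫ x in A, a m x ∂μ - ∫ x in A, a n x ∂μ| ≤ ε := by
    intro A hA hAB
    have hmem := interior_subset (hball (show (⟨_, indicatorConstLp_mem_l1Indicators hA
      (measure_ne_top μ A)⟩ : l1Indicators μ) ∈ Metric.ball f₀ r by
        rw [Metric.mem_ball, Subtype.dist_eq, hf₀A₀, dist_indicatorConstLp_eq_norm,
          norm_indicatorConstLp one_ne_zero ENNReal.one_ne_top]
        simpa using (measureReal_mono hAB).trans_lt hμB))
    simpa only [ν, integral_mul_indicatorConstLp] using hmem m hm n hn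
  have hunion := hclose (A₀ ∪ B) (hA₀.union hB) fun x hx => by
    simp only [mem_symmDiff, mem_union] at hx; tauto
  have hdiff := hclose (A₀ \ B) (hA₀.diff hB) fun x hx => by
    simp only [mem_symmDiff, Set.mem_sdiff] at hx; tauto
  have hsplit : ∀ i, ∫ x in B, a i x ∂μ = ∫ x in A₀ ∪ B, a i x ∂μ - ∫ x in A₀ \ B, a i x ∂μ := by
    intro i
    rw [← sdiff_union_self, setIntegral_union disjoint_sdiff_left hB (ha i).integrableOn
      (ha i).integrableOn]
    ring
  rw [hsplit m, hsplit n]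
  calc _ = |(∫ x in A₀ ∪ B, a m x ∂μ - ∫ x in A₀ ∪ B, a n x ∂μ)
        - (∫ x in A₀ \ B, a m x ∂μ - ∫ x in A₀ \ B, a n x ∂μ)| := by ring_nf
    _ ≤ ε + ε := (abs_sub _ _).trans (add_le_add hunion hdiff)
    _ = 2 * ε := by ring

lemma eLpNorm_one_eq_ofReal_integral_abs {f : α → ℝ} (hf : Integrable f μ) :
    eLpNorm f 1 μ = ENNReal.ofReal (∫ x, |f x| ∂μ) := by
  simp only [eLpNorm_one_eq_lintegral_enorm, ← ofReal_integral_norm_eq_lintegral_enorm hf,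
    Real.norm_eq_abs]

lemma eLpNorm_indicator_one_eq_ofReal {f : α → ℝ} (hf : Integrable f μ) {s : Set α}
    (hs : MeasurableSet s) : eLpNorm (s.indicator f) 1 μ = ENNReal.ofReal (∫ x in s, |f x| ∂μ) := by
  rw [eLpNorm_indicator_eq_eLpNorm_restrict hs, eLpNorm_one_eq_ofReal_integral_abs hf.restrict]

lemma setIntegral_abs_le_of_forall_abs_setIntegral_le {f : α → ℝ} (hf : Integrable f μ)
    {s : Set α} (hs : MeasurableSet s) {ε : ℝ}
    (h : ∀ t ⊆ s, MeasurableSet t → |∫ x in t, f x ∂μ| ≤ ε) : ∫ x in s, |f x| ∂μ ≤ 2 * ε := by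
  set g := hf.1.mk f
  have hfg : f =ᵐ[μ] g := hf.1.ae_eq_mk
  have hpos : MeasurableSet {x | 0 ≤ g x} :=
    measurableSet_le measurable_const hf.1.stronglyMeasurable_mk.measurable
  have hneg : MeasurableSet {x | g x ≤ 0} :=
    measurableSet_le hf.1.stronglyMeasurable_mk.measurable measurable_const
  have hsplit := integral_norm_eq_pos_sub_neg (μ := μ.restrict s) ((hf.congr hfg).restrict)
  rw [Measure.restrict_restrict hpos, Measure.restrict_restrict hneg] at hsplit
  have hcongr : ∀ t, ∫ x in t, g x ∂μ = ∫ x in t, f x ∂μ := fun t =>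
    integral_congr_ae (ae_restrict_of_ae hfg.symm)
  have habs : ∫ x in s, |f x| ∂μ = ∫ x in s, ‖g x‖ ∂μ :=
    integral_congr_ae (ae_restrict_of_ae (hfg.mono fun x hx => by simp [hx]))
  rw [habs, hsplit, hcongr, hcongr]
  have h₁ := h _ inter_subset_right (hpos.inter hs)
  have h₂ := h _ inter_subset_right (hneg.inter hs)
  linarith [le_abs_self (∫ x in {x | 0 ≤ g x} ∩ s, f x ∂μ),
    neg_abs_le (∫ x in {x | g x ≤ 0} ∩ s, f x ∂μ)]

theorem unifIntegrable_of_cauchySeq_setIntegral [IsFiniteMeasure μ] {a : ℕ → α → ℝ}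
    (ha : ∀ n, Integrable (a n) μ)
    (hcauchy : ∀ A, MeasurableSet A → CauchySeq fun n => ∫ x in A, a n x ∂μ) :
    UnifIntegrable a 1 μ := by
  intro ε hε
  obtain ⟨k, r, hr, hclose⟩ :=
    exists_forall_abs_setIntegral_sub_le ha hcauchy (ε := ε / 8) (by positivity)
  obtain ⟨δ, hδ, hfirst⟩ := unifIntegrable_fin (f := fun i : Fin (k + 1) => a i) le_rfl
    ENNReal.one_ne_top (fun i => memLp_one_iff_integrable.2 (ha i)) (ε := ε / 4) (by positivity)
  refine ⟨min δ (r / 2), by positivity, fun n s hs hμs => ?_⟩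
  have hμsδ : μ s ≤ ENNReal.ofReal δ := hμs.trans (ENNReal.ofReal_le_ofReal (min_le_left _ _))
  rcases le_or_gt n k with hnk | hkn
  · exact (hfirst ⟨n, by omega⟩ s hs hμsδ).trans (ENNReal.ofReal_le_ofReal (by linarith))
  rw [eLpNorm_indicator_one_eq_ofReal (ha n) hs]
  refine ENNReal.ofReal_le_ofReal ((setIntegral_abs_le_of_forall_abs_setIntegral_le (ha n) hs
    (ε := ε / 2) fun t hts ht => ?_).trans_eq (by ring))
  have hμt : μ t ≤ ENNReal.ofReal δ := (measure_mono hts).trans hμsδ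
  have hk : |∫ x in t, a k x ∂μ| ≤ ε / 4 := by
    have := hfirst ⟨k, by omega⟩ t ht hμt
    rw [eLpNorm_indicator_one_eq_ofReal (ha k) ht,
      ENNReal.ofReal_le_ofReal_iff (by positivity)] at this
    exact (abs_integral_le_integral_abs).trans this
  have hμtr : μ.real t < r :=
    (ENNReal.toReal_le_of_le_ofReal (by positivity) ((measure_mono hts).trans hμs)).trans_lt
      ((min_le_right _ _).trans_lt (by linarith))
  have hnk := hclose t ht hμtr n hkn.le k le_rfl
  linarith [abs_sub_abs_le_abs_sub (∫ x in t, a n x ∂μ) (∫ x in t, a k x ∂μ)]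

lemma Lp.ae_norm_le_norm_top (φ : Lp ℝ ∞ μ) : ∀ᵐ x ∂μ, ‖φ x‖ ≤ ‖φ‖ := by
  filter_upwards [ae_le_eLpNormEssSup (f := (φ : α → ℝ)) (μ := μ)] with x hx
  rw [← eLpNorm_exponent_top] at hx
  simpa [Lp.norm_def] using ENNReal.toReal_mono (Lp.eLpNorm_ne_top φ) hx

lemma exists_norm_le_one_integral_mul_eq_integral_abs {f : α → ℝ} (hf : AEStronglyMeasurable f μ) :
    ∃ φ : Lp ℝ ∞ μ, ‖φ‖ ≤ 1 ∧ ∫ x, f x * φ x ∂μ = ∫ x, |f x| ∂μ := by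
  set sgn : α → ℝ := fun x => if 0 ≤ hf.mk f x then 1 else -1
  have hsgn : ∀ x, ‖sgn x‖ ≤ 1 := fun x => by by_cases h : 0 ≤ hf.mk f x <;> simp [sgn, h]
  have hmem : MemLp sgn ∞ μ := memLp_top_of_bound
    (Measurable.ite (measurableSet_le measurable_const hf.stronglyMeasurable_mk.measurable)
      measurable_const measurable_const).aestronglyMeasurable 1 (.of_forall hsgn)
  refine ⟨hmem.toLp sgn, ?_, integral_congr_ae ?_⟩
  · rw [Lp.norm_toLp, eLpNorm_exponent_top]
    exact ENNReal.toReal_le_of_le_ofReal zero_le_one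
      (eLpNormEssSup_le_of_ae_bound (.of_forall hsgn))
  · filter_upwards [hmem.coeFn_toLp, hf.ae_eq_mk] with x hφ hfx
    rw [hφ, hfx]
    by_cases h : 0 ≤ hf.mk f x
    · simp [sgn, h, abs_of_nonneg h]
    · simp [sgn, h, abs_of_neg (not_le.1 h)]

theorem exists_eLpNorm_le_of_forall_abs_integral_mul_le {ι : Type*} {a : ι → α → ℝ}
    (ha : ∀ i, Integrable (a i) μ) (h : ∀ φ : Lp ℝ ∞ μ, ∃ C, ∀ i, |∫ x, a i x * φ x ∂μ| ≤ C) :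
    ∃ M : ℝ≥0, ∀ i, eLpNorm (a i) 1 μ ≤ M := by
  set T : ι → Lp ℝ ∞ μ →L[ℝ] ℝ := fun i =>
    (ContinuousLinearMap.mul ℝ ℝ).lpPairing μ 1 ∞ (ha i).toL1
  have hT : ∀ i φ, T i φ = ∫ x, a i x * φ x ∂μ := fun i φ => by
    rw [ContinuousLinearMap.lpPairing_eq_integral]
    exact integral_congr_ae ((ha i).coeFn_toL1.mono fun x hx => by
      simp only [ContinuousLinearMap.mul_apply', hx])
  obtain ⟨M, hM⟩ := banach_steinhaus (g := T) fun φ => by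
    simpa only [hT, Real.norm_eq_abs] using h φ
  refine ⟨M.toNNReal, fun i => ?_⟩
  obtain ⟨φ, hφ, hφa⟩ := exists_norm_le_one_integral_mul_eq_integral_abs (ha i).1
  rw [eLpNorm_one_eq_ofReal_integral_abs (ha i), ← hφa, ← hT]
  refine ENNReal.ofReal_le_ofReal ((le_abs_self _).trans ?_)
  calc |T i φ| ≤ ‖T i‖ * ‖φ‖ := (T i).le_opNorm φ
    _ ≤ M * 1 := mul_le_mul (hM i) hφ (norm_nonneg _) ((norm_nonneg _).trans (hM i))
    _ = M := mul_one M

lemma tendsto_integral_mul_of_ae_abs_le {ι : Type*} {l : Filter ι} {a : ι → α → ℝ} {alim : α → ℝ}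
    (hweak : ∀ φ : α → ℝ, Measurable φ → (∃ C : ℝ, ∀ x, |φ x| ≤ C) →
      Tendsto (fun i => ∫ x, a i x * φ x ∂μ) l (𝓝 (∫ x, alim x * φ x ∂μ)))
    {φ : α → ℝ} (hφ : AEStronglyMeasurable φ μ) {C : ℝ} (hφC : ∀ᵐ x ∂μ, |φ x| ≤ C) :
    Tendsto (fun i => ∫ x, a i x * φ x ∂μ) l (𝓝 (∫ x, alim x * φ x ∂μ)) := by
  set ψ : α → ℝ := fun x => max (-|C|) (min |C| (hφ.mk φ x))
  have hψ : Measurable ψ :=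
    measurable_const.max (measurable_const.min hφ.stronglyMeasurable_mk.measurable)
  have hψC : ∀ x, |ψ x| ≤ |C| := fun x =>
    abs_le.2 ⟨le_max_left _ _, max_le (neg_le_self (abs_nonneg C)) (min_le_left _ _)⟩
  have hφψ : φ =ᵐ[μ] ψ := by
    filter_upwards [hφC, hφ.ae_eq_mk] with x hx hmk
    obtain ⟨h₁, h₂⟩ := abs_le.1 (hx.trans (le_abs_self C))
    simp only [ψ, ← hmk, min_eq_right h₂, max_eq_right h₁]
  have hcongr : ∀ b : α → ℝ, ∫ x, b x * φ x ∂μ = ∫ x, b x * ψ x ∂μ := fun b =>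
    integral_congr_ae (hφψ.mono fun x hx => by simp only [hx])
  simpa only [hcongr] using hweak ψ hψ ⟨|C|, hψC⟩

theorem uniformIntegrable_of_tendsto_integral_mul [IsFiniteMeasure μ] {a : ℕ → α → ℝ}
    {alim : α → ℝ} (ha : ∀ n, Integrable (a n) μ)
    (hweak : ∀ φ : α → ℝ, Measurable φ → (∃ C : ℝ, ∀ x, |φ x| ≤ C) →
      Tendsto (fun n => ∫ x, a n x * φ x ∂μ) atTop (𝓝 (∫ x, alim x * φ x ∂μ))) :
    UniformIntegrable a 1 μ := by
  refine ⟨fun n => (ha n).1, unifIntegrable_of_cauchySeq_setIntegral ha fun A hA => ?_,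
    exists_eLpNorm_le_of_forall_abs_integral_mul_le ha fun φ => ?_⟩
  · have h := hweak (A.indicator 1) (measurable_const.indicator hA) ⟨1, fun x => by
      by_cases hx : x ∈ A <;> simp [hx]⟩
    simp only [← indicator_mul_right, Pi.one_apply, mul_one, integral_indicator hA] at h
    exact h.cauchySeq
  · obtain ⟨C, hC⟩ := (tendsto_integral_mul_of_ae_abs_le hweak (Lp.aestronglyMeasurable φ)
      (Lp.ae_norm_le_norm_top φ)).norm.bddAbove_range
    exact ⟨C, fun n => hC ⟨n, rfl⟩⟩

end MeasureTheory

theorem stmt11_general {Q : Type*} [MeasurableSpace Q] (μ : Measure Q) [IsFiniteMeasure μ]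
    (a : ℕ → Q → ℝ) (alim : Q → ℝ) (b : ℕ → Q → ℝ) (blim : Q → ℝ)
    (ha : ∀ n, Integrable (a n) μ)
    (hweak : ∀ φ : Q → ℝ, Measurable φ → (∃ C : ℝ, ∀ x, |φ x| ≤ C) →
      Tendsto (fun n => ∫ x, a n x * φ x ∂μ) atTop (nhds (∫ x, alim x * φ x ∂μ)))
    (hbmeas : ∀ n, Measurable (b n)) (hblimmeas : Measurable blim)
    (hbd : ∃ C : ℝ, ∀ n, ∀ᵐ x ∂μ, |b n x| ≤ C)
    (hae : ∀ᵐ x ∂μ, Tendsto (fun n => b n x) atTop (nhds (blim x))) :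
    Tendsto (fun n => ∫ x, a n x * b n x ∂μ) atTop (nhds (∫ x, alim x * blim x ∂μ)) := by
  obtain ⟨C, hC⟩ := hbd
  have hblimC : ∀ᵐ x ∂μ, |blim x| ≤ C := by
    filter_upwards [hae, ae_all_iff.2 hC] with x hx hCx
    exact le_of_tendsto' hx.abs hCx
  have hui := uniformIntegrable_of_tendsto_integral_mul ha hweak
  have hdiffC : ∀ n, ∀ᵐ x ∂μ, |b n x - blim x| ≤ 2 * C := fun n => by
    filter_upwards [hC n, hblimC] with x h₁ h₂
    linarith [abs_sub (b n x) (blim x)]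
  have hdiff : Tendsto (fun n => ∫ x, a n x * (b n x - blim x) ∂μ) atTop (𝓝 0) :=
    hui.tendsto_integral_mul_of_tendstoInMeasure (tendstoInMeasure_of_tendsto_ae
      (fun n => ((hbmeas n).sub hblimmeas).aestronglyMeasurable)
      (hae.mono fun x hx => by simpa using hx.sub_const (blim x))) hdiffC
  have hlim := hdiff.add (tendsto_integral_mul_of_ae_abs_le hweak
    hblimmeas.aestronglyMeasurable hblimC)
  rw [zero_add] at hlim
  refine hlim.congr fun n => ?_
  rw [← integral_add ((ha n).mul_bdd (g := fun x => b n x - blim x)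
    ((hbmeas n).sub hblimmeas).aestronglyMeasurable (hdiffC n))
    ((ha n).mul_bdd hblimmeas.aestronglyMeasurable hblimC)]
  simp only [← mul_add, sub_add_cancel]

/-- if `a_n → a` weakly in `L¹(μ)` and `b_n` is bounded in `L^∞(μ)` and
converges `μ`-a.e. to `b`, then `∫ a_n b_n dμ → ∫ a b dμ`. -/
theorem stmt11 {Q : Type*} [MeasurableSpace Q] (μ : Measure Q) [IsFiniteMeasure μ]
    (a : ℕ → Q → ℝ) (alim : Q → ℝ) (b : ℕ → Q → ℝ) (blim : Q → ℝ)
    (ha : ∀ n, Integrable (a n) μ) (halim : Integrable alim μ)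
    (hweak : ∀ φ : Q → ℝ, Measurable φ → (∃ C : ℝ, ∀ x, |φ x| ≤ C) →
      Tendsto (fun n => ∫ x, a n x * φ x ∂μ) atTop (nhds (∫ x, alim x * φ x ∂μ)))
    (hbmeas : ∀ n, Measurable (b n)) (hblimmeas : Measurable blim)
    (hbd : ∃ C : ℝ, ∀ n, ∀ᵐ x ∂μ, |b n x| ≤ C)
    (hae : ∀ᵐ x ∂μ, Tendsto (fun n => b n x) atTop (nhds (blim x))) :
    Tendsto (fun n => ∫ x, a n x * b n x ∂μ) atTop (nhds (∫ x, alim x * blim x ∂μ)) :=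
  stmt11_general μ a alim b blim ha hweak hbmeas hblimmeas hbd hae
end

section
/- Fix k > 0 and ℓ > 2k. Define T_s(r) = max(min(r, s), −s). Let v ∈ ℝ and w ∈ ℝ with |w| ≤ k, and set R = T_{ℓ+k}(v − w) − T_{ℓ−k}(v − T_k(v)). Then: (i) |R| ≤ 4k; (ii) if |v| ≥ ℓ + 2k then R = 2k·sign(v). -/
/-!
`T_s` is the projection onto `[-s, s]`, so it is `1`-Lipschitz both in its argument and in the
level `s`. Moving from `T_{ℓ+k}(v - w)` to `T_{ℓ-k}(v - w)` costs at most `2k`, and moving the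
argument from `v - w` to `v - T_k(v)` costs at most `|T_k(v) - w| ≤ 2k`. For `v ≥ ℓ + 2k` both
arguments lie above their truncation levels, so `R = (ℓ + k) - (ℓ - k)`; the case `v ≤ -(ℓ + 2k)`
is symmetric.
-/

/-- Truncation at level `s`: `T_s(r) = max(min(r,s), −s)`. -/
def trunc (s r : ℝ) : ℝ := max (min r s) (-s)

lemma abs_trunc_sub_trunc_le (s x y : ℝ) : |trunc s x - trunc s y| ≤ |x - y| :=
  (abs_max_sub_max_le_abs _ _ _).trans (by simpa using abs_min_sub_min_le_max x s y s)

lemma abs_trunc_sub_trunc_level_le (a b x : ℝ) : |trunc a x - trunc b x| ≤ |a - b| := by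
  refine (abs_max_sub_max_le_max _ _ _ _).trans (max_le ?_ ?_)
  · simpa using abs_min_sub_min_le_max x a x b
  · rw [neg_sub_neg, abs_sub_comm]

lemma abs_trunc_le {s : ℝ} (hs : 0 ≤ s) (r : ℝ) : |trunc s r| ≤ s :=
  abs_le.2 ⟨le_max_right _ _, max_le (min_le_right _ _) (by linarith)⟩

lemma trunc_of_le {s r : ℝ} (hs : 0 ≤ s) (h : s ≤ r) : trunc s r = s := by
  rw [trunc, min_eq_right h, max_eq_left (by linarith)]

lemma trunc_of_le_neg {s r : ℝ} (h : r ≤ -s) : trunc s r = -s :=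
  max_eq_right ((min_le_left _ _).trans h)

variable {k ℓ v w : ℝ}

lemma abs_trunc_sub_trunc_sub_trunc_le (hk : 0 ≤ k) (hw : |w| ≤ k) :
    |trunc (ℓ + k) (v - w) - trunc (ℓ - k) (v - trunc k v)| ≤ 4 * k := by
  have hlevel : |trunc (ℓ + k) (v - w) - trunc (ℓ - k) (v - w)| ≤ 2 * k := by
    simpa [← two_mul, abs_of_nonneg hk] using
      abs_trunc_sub_trunc_level_le (ℓ + k) (ℓ - k) (v - w)
  have harg : |(v - w) - (v - trunc k v)| ≤ 2 * k := by
    rw [sub_sub_sub_cancel_left]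
    linarith [abs_sub (trunc k v) w, abs_trunc_le hk v]
  calc |trunc (ℓ + k) (v - w) - trunc (ℓ - k) (v - trunc k v)|
      ≤ |trunc (ℓ + k) (v - w) - trunc (ℓ - k) (v - w)|
        + |trunc (ℓ - k) (v - w) - trunc (ℓ - k) (v - trunc k v)| := abs_sub_le _ _ _
    _ ≤ 2 * k + 2 * k := add_le_add hlevel ((abs_trunc_sub_trunc_le _ _ _).trans harg)
    _ = 4 * k := by ring

lemma trunc_sub_trunc_sub_trunc_of_le (hk : 0 ≤ k) (hℓ : k ≤ ℓ) (hw : |w| ≤ k)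
    (hv : ℓ + 2 * k ≤ v) :
    trunc (ℓ + k) (v - w) - trunc (ℓ - k) (v - trunc k v) = 2 * k := by
  have hw' := le_of_abs_le hw
  rw [trunc_of_le hk (by linarith), trunc_of_le (by linarith) (by linarith),
    trunc_of_le (by linarith) (by linarith)]
  ring

lemma trunc_sub_trunc_sub_trunc_of_le_neg (hk : 0 ≤ k) (hℓ : k ≤ ℓ) (hw : |w| ≤ k)
    (hv : v ≤ -(ℓ + 2 * k)) :
    trunc (ℓ + k) (v - w) - trunc (ℓ - k) (v - trunc k v) = -(2 * k) := by
  have hw' := neg_abs_le w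
  rw [trunc_of_le_neg (by linarith : v ≤ -k), trunc_of_le_neg (by linarith),
    trunc_of_le_neg (by linarith)]
  ring

/-- with `R = T_{ℓ+k}(v − w) − T_{ℓ−k}(v − T_k(v))`, `|w| ≤ k`, `ℓ > 2k`:
(i) `|R| ≤ 4k`; (ii) if `|v| ≥ ℓ + 2k` then `R = 2k·sign(v)`. -/
theorem stmt12 (k ℓ v w : ℝ) (hk : 0 < k) (hℓ : 2 * k < ℓ) (hw : |w| ≤ k) :
    |trunc (ℓ + k) (v - w) - trunc (ℓ - k) (v - trunc k v)| ≤ 4 * k ∧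
    (ℓ + 2 * k ≤ |v| →
      trunc (ℓ + k) (v - w) - trunc (ℓ - k) (v - trunc k v) = 2 * k * Real.sign v) := by
  refine ⟨abs_trunc_sub_trunc_sub_trunc_le hk.le hw, fun hv => ?_⟩
  rcases abs_cases v with ⟨hv_abs, -⟩ | ⟨hv_abs, hv_neg⟩
  · rw [Real.sign_of_pos (by linarith), mul_one]
    exact trunc_sub_trunc_sub_trunc_of_le hk.le (by linarith) hw (by linarith)
  · rw [Real.sign_of_neg hv_neg, mul_neg_one]
    exact trunc_sub_trunc_sub_trunc_of_le_neg hk.le (by linarith) hw (by linarith)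
end

section
/- Let Ω ⊂ ℝ^N have finite Lebesgue measure, T > 0, Q = Ω×(0,T), p > 1, N ≥ 2, p_c = p − 1 + p/N, m_c = p − N/(N+1). Let v : Q → ℝ be measurable with |∇v| measurable, and suppose there exist constants C₁, c, M ≥ 1 such that: meas{|v| > s} ≤ C₁ M s^{-p_c} for all s ≥ 1, and ∫_{{|v| ≤ s}} |∇v|^p ≤ c M s for all s ≥ 1. Then there exists C₂ depending only on C₁, c (not on M or k) such that meas{|∇v| > k} ≤ C₂ (M + M^{(p+N)/N}) k^{-m_c} for all k ≥ 1. -/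
/-!
Split `{|∇v| > k}` at the level `s = k^θ` of `v`: the part where `|v| > s` is controlled by the
tail bound, and the part where `|v| ≤ s` by Chebyshev's inequality applied to the truncated
energy `∫_{|v| ≤ s} |∇v|^p ≤ c M s`. The two contributions `s^{-p_c}` and `s k^{-p}` balance
exactly when `θ p_c = p - θ`, i.e. `θ = N/(N+1)`, and both become `k^{-m_c}`.
-/

open MeasureTheory

namespace MeasureTheory

variable {α : Type*} [MeasurableSpace α] (μ : Measure α) {v g : α → ℝ}

theorem measure_lt_abs_le_add_setLIntegral_div (hg : AEMeasurable g μ) {s k p : ℝ}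
    (hk : 0 < k) (hp : 0 ≤ p) :
    μ {x | k < |g x|} ≤ μ {x | s < |v x|} +
      (∫⁻ x in {x | |v x| ≤ s}, ENNReal.ofReal (|g x| ^ p) ∂μ) / ENNReal.ofReal (k ^ p) := by
  have hkp : 0 < k ^ p := Real.rpow_pos_of_pos hk p
  have hsplit : {x | k < |g x|} ⊆ {x | s < |v x|} ∪ ({x | k < |g x|} ∩ {x | |v x| ≤ s}) := by
    intro x hx
    by_cases h : |v x| ≤ s
    · exact Or.inr ⟨hx, h⟩
    · exact Or.inl (not_le.mp h)
  have hlevel : {x | k < |g x|} ⊆ {x | ENNReal.ofReal (k ^ p) ≤ ENNReal.ofReal (|g x| ^ p)} :=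
    fun x hx ↦ ENNReal.ofReal_le_ofReal (Real.rpow_le_rpow hk.le (le_of_lt hx) hp)
  calc μ {x | k < |g x|}
      ≤ μ {x | s < |v x|} + μ ({x | k < |g x|} ∩ {x | |v x| ≤ s}) :=
        (measure_mono hsplit).trans (measure_union_le _ _)
    _ ≤ μ {x | s < |v x|} + μ.restrict {x | |v x| ≤ s}
          {x | ENNReal.ofReal (k ^ p) ≤ ENNReal.ofReal (|g x| ^ p)} :=
        add_le_add le_rfl ((Measure.le_restrict_apply _ _).trans (measure_mono hlevel))
    _ ≤ _ := add_le_add le_rfl <| meas_ge_le_lintegral_div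
        (hg.restrict.abs.pow_const p).ennreal_ofReal
        (ENNReal.ofReal_pos.mpr hkp).ne' ENNReal.ofReal_ne_top

theorem measure_lt_abs_le_of_tail_of_truncated_energy (hg : AEMeasurable g μ)
    {p q θ A B : ℝ} (hp : 0 ≤ p) (hθ : 0 ≤ θ) (hθq : θ * q = p - θ) (hA : 0 ≤ A) (hB : 0 ≤ B)
    (htail : ∀ s : ℝ, 1 ≤ s → μ {x | s < |v x|} ≤ ENNReal.ofReal (A * s ^ (-q)))
    (henergy : ∀ s : ℝ, 1 ≤ s →
      ∫⁻ x in {x | |v x| ≤ s}, ENNReal.ofReal (|g x| ^ p) ∂μ ≤ ENNReal.ofReal (B * s))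
    {k : ℝ} (hk : 1 ≤ k) :
    μ {x | k < |g x|} ≤ ENNReal.ofReal ((A + B) * k ^ (-(p - θ))) := by
  have hk0 : 0 < k := one_pos.trans_le hk
  have hkp : 0 < k ^ p := Real.rpow_pos_of_pos hk0 p
  set s := k ^ θ
  have hs : 1 ≤ s := Real.one_le_rpow hk hθ
  have htail_k : s ^ (-q) = k ^ (-(p - θ)) := by
    rw [← Real.rpow_mul hk0.le]
    congr 1
    linarith
  have henergy_k : B * s / k ^ p = B * k ^ (-(p - θ)) := by
    rw [mul_div_assoc, ← Real.rpow_sub hk0]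
    congr 2
    ring
  calc μ {x | k < |g x|}
      ≤ ENNReal.ofReal (A * s ^ (-q)) + ENNReal.ofReal (B * s) / ENNReal.ofReal (k ^ p) :=
        (measure_lt_abs_le_add_setLIntegral_div μ hg hk0 hp).trans
          (add_le_add (htail s hs) (ENNReal.div_le_div_right (henergy s hs) _))
    _ = ENNReal.ofReal ((A + B) * k ^ (-(p - θ))) := by
        rw [← ENNReal.ofReal_div_of_pos hkp, htail_k, henergy_k,
          ← ENNReal.ofReal_add (by positivity) (by positivity), add_mul]

end MeasureTheory

/-- gradient measure estimate. If `meas{|v| > s} ≤ C₁ M s^{-p_c}` and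
`∫_{|v|≤s} |∇v|^p ≤ c M s` for `s ≥ 1`, then `meas{|∇v| > k} ≤ C₂ (M + M^{(p+N)/N}) k^{-m_c}`
for all `k ≥ 1`, with `C₂` depending only on `C₁, c` (and `N, p`). -/
theorem stmt15 (N : ℕ) (hN : 2 ≤ N) (p : ℝ) (hp : 1 < p) (C₁ c : ℝ)
    (hC₁ : 1 ≤ C₁) (hc : 1 ≤ c) :
    ∃ C₂ : ℝ, 0 < C₂ ∧
      ∀ (Ω : Set (EuclideanSpace ℝ (Fin N))) (T : ℝ), MeasurableSet Ω → 0 < T →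
        volume Ω < ⊤ →
        ∀ M : ℝ, 1 ≤ M →
        ∀ v g : EuclideanSpace ℝ (Fin N) × ℝ → ℝ, Measurable v → Measurable g →
          (∀ s : ℝ, 1 ≤ s →
            (volume.restrict (Ω ×ˢ Set.Ioo 0 T)) {x | s < |v x|} ≤
              ENNReal.ofReal (C₁ * M * s ^ (-(p - 1 + p / N)))) →
          (∀ s : ℝ, 1 ≤ s →
            (∫⁻ x in {x | |v x| ≤ s}, ENNReal.ofReal (|g x| ^ p)
                ∂(volume.restrict (Ω ×ˢ Set.Ioo 0 T))) ≤
              ENNReal.ofReal (c * M * s)) →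
          ∀ k : ℝ, 1 ≤ k →
            (volume.restrict (Ω ×ˢ Set.Ioo 0 T)) {x | k < |g x|} ≤
              ENNReal.ofReal
                (C₂ * (M + M ^ ((p + N) / N)) * k ^ (-(p - N / (N + 1)))) := by
  refine ⟨C₁ + c, by positivity, ?_⟩
  intro Ω T _ _ _ M hM v g _ hg htail henergy k hk
  have hN0 : (N : ℝ) ≠ 0 := by exact_mod_cast (by omega : N ≠ 0)
  have hbalance : (N / (N + 1) : ℝ) * (p - 1 + p / N) = p - N / (N + 1) := by
    field_simp
    ring
  refine (measure_lt_abs_le_of_tail_of_truncated_energy _ hg.aemeasurable (by linarith)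
    (by positivity) hbalance (by positivity) (by positivity) htail henergy hk).trans ?_
  have hMpow : 0 ≤ M ^ ((p + N) / N) := Real.rpow_nonneg (by linarith) _
  rw [← add_mul]
  gcongr
  linarith
end
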